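/- arXiv:1512.06403 — 3 statements merged into one kernel-verified Lean document; each statement's English description precedes it below -/
import Mathlib

section
/- For every n ≥ 4, the finite symplectic group Sp(2n, 𝔽₂) over the field with two elements is a simple group. -/
/-!
Write `V = 𝔽₂^{2n}` with its symplectic form `ω` and `T_v : x ↦ x + ω(x, v) v` for the
symplectic transvection in direction `v`.

The transvections generate `Sp(V)`: transvections supported on a set of hyperbolic planes act
transitively on the hyperbolic pairs in their span, so any `g` can be corrected plane by plane to
the identity.

Let `N ≠ 1` be normal, and `σ ∈ N` move `x`. Since `Sp(V)` permutes the `N`-orbits and is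
transitive on hyperbolic pairs, as soon as one `N`-orbit contains a hyperbolic pair `(u, v)`,
`N` is transitive on `V ∖ 0`. Such a pair is `(x, σx)`, or, if `ω(x, σx) = 0`, its image
`(σx, σx + a)` under a transvection `T_a` fixing `x`. So all `T_v`, `v ≠ 0`, are conjugate under
`N` and have a common image `t` in `Sp(V) ⧸ N`, with `t² = 1`. For pairwise orthogonal `a, b, c`,
`T_a T_b T_c T_{a+b} T_{b+c} T_{a+c} = T_{a+b+c}`, so `t⁶ = t` and `t = 1`: `N` contains every
transvection, hence `N = Sp(V)`.
-/

open Matrix MulAction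

namespace SymplecticGroup

variable {l R : Type*} [CommRing R]

variable (l R) in
def symplecticForm [Fintype l] [DecidableEq l] : LinearMap.BilinForm R (l ⊕ l → R) :=
  toLinearMap₂' R (J l R)

local notation "ω" => symplecticForm _ _

section Form

variable [Fintype l] [DecidableEq l]

theorem symplecticForm_def (x y : l ⊕ l → R) : ω x y = x ⬝ᵥ (J l R *ᵥ y) :=
  toLinearMap₂'_apply' _ _ _

theorem J_mulVec (y : l ⊕ l → R) :
    J l R *ᵥ y = Sum.elim (fun j => -y (.inr j)) (fun j => y (.inl j)) := by
  ext (j | j) <;> simp [J, mulVec, dotProduct, fromBlocks, Fintype.sum_sum_type, one_apply]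

theorem symplecticForm_apply (x y : l ⊕ l → R) :
    ω x y = ∑ j, (x (.inr j) * y (.inl j) - x (.inl j) * y (.inr j)) := by
  simp only [symplecticForm_def, J_mulVec, dotProduct, Fintype.sum_sum_type, Sum.elim_inl,
    Sum.elim_inr, ← Finset.sum_add_distrib]
  exact Finset.sum_congr rfl fun j _ => by ring

@[simp]
theorem symplecticForm_self (x : l ⊕ l → R) : ω x x = 0 := by
  simp [symplecticForm_apply, mul_comm]

theorem symplecticForm_swap (x y : l ⊕ l → R) : ω y x = -ω x y := by
  simp only [symplecticForm_apply, ← Finset.sum_neg_distrib]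
  exact Finset.sum_congr rfl fun j _ => by ring

theorem single_inl_symplecticForm (j : l) (x : l ⊕ l → R) :
    ω (Pi.single (.inl j) 1) x = -x (.inr j) := by
  simp [symplecticForm_apply, Pi.single_apply]

theorem single_inr_symplecticForm (j : l) (x : l ⊕ l → R) :
    ω (Pi.single (.inr j) 1) x = x (.inl j) := by
  simp [symplecticForm_apply, Pi.single_apply]

theorem single_swap_symplecticForm_eq_zero_iff (i : l ⊕ l) (x : l ⊕ l → R) :
    ω (Pi.single i.swap 1) x = 0 ↔ x i = 0 := by
  cases i <;> simp [single_inl_symplecticForm, single_inr_symplecticForm]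

theorem mem_iff_symplecticForm {A : Matrix (l ⊕ l) (l ⊕ l) R} :
    A ∈ symplecticGroup l R ↔ ∀ x y, ω (A *ᵥ x) (A *ᵥ y) = ω x y := by
  have key : ∀ x y, ω (A *ᵥ x) (A *ᵥ y) = x ⬝ᵥ ((Aᵀ * J l R * A) *ᵥ y) := fun x y => by
    simp only [symplecticForm_def, mulVec_mulVec, dotProduct_mulVec, vecMul_mulVec,
      Matrix.mul_assoc]
  simp only [mem_iff', key]
  refine ⟨fun h x y => by rw [h, symplecticForm_def], fun h => ?_⟩
  ext i j
  simpa [symplecticForm_def] using h (Pi.single i 1) (Pi.single j 1)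

theorem symplecticForm_smul_smul (g : symplecticGroup l R) (x y : l ⊕ l → R) :
    ω (g • x) (g • y) = ω x y :=
  mem_iff_symplecticForm.1 g.2 x y

theorem ext_smul {g h : symplecticGroup l R} (H : ∀ x : l ⊕ l → R, g • x = h • x) : g = h :=
  Subtype.ext <| ext_iff_mulVec.2 H

theorem eq_one_of_smul_single {g : symplecticGroup l R}
    (hg : ∀ i, g • (Pi.single i 1 : l ⊕ l → R) = Pi.single i 1) : g = 1 := by
  refine Subtype.ext <| Matrix.ext fun i j => ?_
  simpa [Submonoid.smul_def, mulVec_single, Pi.single_apply, one_apply] using congrFun (hg j) i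

def transvectionMatrix (v : l ⊕ l → R) : Matrix (l ⊕ l) (l ⊕ l) R :=
  1 + vecMulVec v (J l R *ᵥ v)

theorem transvectionMatrix_mulVec (v x : l ⊕ l → R) :
    transvectionMatrix v *ᵥ x = x + ω x v • v := by
  rw [transvectionMatrix, add_mulVec, one_mulVec, vecMulVec_mulVec, op_smul_eq_smul,
    dotProduct_comm, symplecticForm_def]

theorem transvectionMatrix_mem (v : l ⊕ l → R) :
    transvectionMatrix v ∈ symplecticGroup l R := by
  refine mem_iff_symplecticForm.2 fun x y => ?_
  simp only [transvectionMatrix_mulVec, map_add, map_smul, LinearMap.add_apply,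
    LinearMap.smul_apply, smul_eq_mul, symplecticForm_self]
  rw [symplecticForm_swap v x, symplecticForm_swap v y]
  ring

def transvection (v : l ⊕ l → R) : symplecticGroup l R :=
  ⟨transvectionMatrix v, transvectionMatrix_mem v⟩

theorem transvection_smul (v x : l ⊕ l → R) : transvection v • x = x + ω x v • v :=
  transvectionMatrix_mulVec v x

@[simp]
theorem transvection_zero : transvection (0 : l ⊕ l → R) = 1 :=
  ext_smul fun x => by simp [transvection_smul]

theorem conj_transvection (g : symplecticGroup l R) (v : l ⊕ l → R) :
    g * transvection v * g⁻¹ = transvection (g • v) := by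
  refine ext_smul fun x => ?_
  have h : ω (g⁻¹ • x) v = ω x (g • v) := by
    rw [← symplecticForm_smul_smul g, smul_inv_smul]
  simp only [mul_smul, transvection_smul, smul_add, smul_inv_smul, h]
  rw [smul_comm]

end Form

/-- The span of the hyperbolic planes `⟨Pi.single (.inl j) 1, Pi.single (.inr j) 1⟩`, `j ∈ s`;
`i.elim id id` is the index of the plane containing the basis vector `Pi.single i 1`. -/
def supportedOn (s : Finset l) : Submodule R (l ⊕ l → R) :=
  Submodule.pi {i : l ⊕ l | i.elim id id ∉ s} fun _ => ⊥

theorem mem_supportedOn {s : Finset l} {x : l ⊕ l → R} :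
    x ∈ supportedOn s ↔ ∀ i, i.elim id id ∉ s → x i = 0 := by
  simp [supportedOn, Submodule.mem_pi]

theorem supportedOn_mono {s t : Finset l} (h : s ⊆ t) :
    supportedOn s ≤ (supportedOn t : Submodule R (l ⊕ l → R)) :=
  fun _ hx => mem_supportedOn.2 fun i hi => mem_supportedOn.1 hx i fun hs => hi (h hs)

theorem single_mem_supportedOn [DecidableEq l] {s : Finset l} {i : l ⊕ l}
    (hi : i.elim id id ∈ s) (c : R) : Pi.single i c ∈ supportedOn s :=
  mem_supportedOn.2 fun _ hi' =>
    Pi.single_eq_of_ne (M := fun _ => R) (by rintro rfl; exact hi' hi) c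

theorem mem_supportedOn_univ [Fintype l] (x : l ⊕ l → R) : x ∈ supportedOn Finset.univ :=
  mem_supportedOn.2 fun _ hi => absurd (Finset.mem_univ _) hi

variable [Fintype l] [DecidableEq l]

variable (R) in
def fixingPlanesOutside (s : Finset l) : Subgroup (symplecticGroup l R) :=
  fixingSubgroup _ ((fun i => (Pi.single i 1 : l ⊕ l → R)) '' {i : l ⊕ l | i.elim id id ∉ s})

theorem mem_fixingPlanesOutside {s : Finset l} {g : symplecticGroup l R} :
    g ∈ fixingPlanesOutside R s ↔
      ∀ i : l ⊕ l, i.elim id id ∉ s → g • (Pi.single i 1 : l ⊕ l → R) = Pi.single i 1 := by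
  simp only [fixingPlanesOutside, mem_fixingSubgroup_iff, Set.forall_mem_image, Set.mem_ofPred_eq]

theorem smul_mem_supportedOn {s : Finset l} {g : symplecticGroup l R}
    (hg : g ∈ fixingPlanesOutside R s) {y : l ⊕ l → R} (hy : y ∈ supportedOn s) :
    g • y ∈ supportedOn s := by
  refine mem_supportedOn.2 fun i hi => ?_
  have hswap : i.swap.elim id id ∉ s := by cases i <;> exact hi
  rw [← single_swap_symplecticForm_eq_zero_iff, ← mem_fixingPlanesOutside.1 hg _ hswap,
    symplecticForm_smul_smul, single_swap_symplecticForm_eq_zero_iff]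
  exact mem_supportedOn.1 hy i hi

variable (R) in
def transvectionSubgroup (s : Finset l) : Subgroup (symplecticGroup l R) :=
  Subgroup.closure (transvection '' (supportedOn s : Submodule R (l ⊕ l → R)))

theorem transvection_mem_transvectionSubgroup {s : Finset l} {v : l ⊕ l → R}
    (hv : v ∈ supportedOn s) : transvection v ∈ transvectionSubgroup R s :=
  Subgroup.subset_closure ⟨v, hv, rfl⟩

theorem transvectionSubgroup_mono {s t : Finset l} (h : s ⊆ t) :
    transvectionSubgroup R s ≤ transvectionSubgroup R t :=
  Subgroup.closure_mono <| Set.image_mono <| supportedOn_mono h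

theorem transvectionSubgroup_le_fixingPlanesOutside (s : Finset l) :
    transvectionSubgroup R s ≤ fixingPlanesOutside R s := by
  refine Subgroup.closure_le _ |>.2 ?_
  rintro _ ⟨w, hw, rfl⟩
  refine mem_fixingPlanesOutside.2 fun i hi => ?_
  have hw' : w i.swap = 0 := mem_supportedOn.1 hw _ (by cases i <;> exact hi)
  rw [transvection_smul, ← i.swap_swap, single_swap_symplecticForm_eq_zero_iff .. |>.2 hw',
    zero_smul, add_zero]

section ZModTwo

local notation "V" => l ⊕ l → ZMod 2

theorem zmod_two_eq_zero_or_eq_one (a : ZMod 2) : a = 0 ∨ a = 1 := by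
  revert a; decide

theorem symplecticForm_comm (x y : V) : ω y x = ω x y := by
  rw [symplecticForm_swap, ZModModule.neg_eq_self]

theorem single_swap_symplecticForm (i : l ⊕ l) (x : V) : ω (Pi.single i.swap 1) x = x i := by
  cases i <;> simp [single_inl_symplecticForm, single_inr_symplecticForm, ZModModule.neg_eq_self]

theorem transvection_smul_of_eq_zero {v x : V} (h : ω x v = 0) : transvection v • x = x := by
  rw [transvection_smul, h, zero_smul, add_zero]

theorem transvection_smul_of_eq_one {v x : V} (h : ω x v = 1) :
    transvection v • x = x + v := by
  rw [transvection_smul, h, one_smul]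

theorem transvection_add_smul {u v : V} (h : ω u v = 1) : transvection (u + v) • u = v := by
  rw [transvection_smul_of_eq_one (by rw [map_add, symplecticForm_self, h, zero_add]),
    ← add_assoc, ZModModule.add_self, zero_add]

theorem transvection_mul_self (v : V) : transvection v * transvection v = 1 :=
  ext_smul fun x => by
    rw [mul_smul, transvection_smul, transvection_smul, map_add, LinearMap.add_apply,
      map_smul, LinearMap.smul_apply, symplecticForm_self, smul_zero, add_zero, add_assoc,
      ZModModule.add_self, add_zero, one_smul]

theorem transvection_mul_six_eq {a b c : V} (hab : ω a b = 0) (hac : ω a c = 0)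
    (hbc : ω b c = 0) :
    transvection a * transvection b * transvection c * transvection (a + b) *
      transvection (b + c) * transvection (a + c) = transvection (a + b + c) := by
  have hba : ω b a = 0 := by rwa [symplecticForm_comm]
  have hca : ω c a = 0 := by rwa [symplecticForm_comm]
  have hcb : ω c b = 0 := by rwa [symplecticForm_comm]
  refine ext_smul fun x => ?_
  simp only [mul_smul, transvection_smul, map_add, map_smul, LinearMap.add_apply,
    LinearMap.smul_apply, smul_eq_mul, symplecticForm_self, hab, hac, hbc, hba, hca, hcb,
    mul_zero, add_zero]
  ext i
  simp only [Pi.add_apply, Pi.smul_apply, smul_eq_mul]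
  ring_nf
  reduce_mod_char

theorem ne_zero_of_symplecticForm_eq_one {x y : V} (h : ω x y = 1) : x ≠ 0 := by
  rintro rfl
  simp at h

theorem exists_mem_supportedOn_symplecticForm_eq_one {s : Finset l} {x : V}
    (hx : x ∈ supportedOn s) (hx0 : x ≠ 0) : ∃ y ∈ supportedOn s, ω x y = 1 := by
  obtain ⟨i, hi⟩ := Function.ne_iff.1 hx0
  refine ⟨Pi.single i.swap 1, single_mem_supportedOn ?_ 1, ?_⟩
  · by_contra h
    exact hi (mem_supportedOn.1 hx i (by cases i <;> exact h))
  · rw [symplecticForm_comm, single_swap_symplecticForm]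
    exact (zmod_two_eq_zero_or_eq_one _).resolve_left hi

theorem exists_mem_supportedOn_symplecticForm_eq_one_and_eq_one {s : Finset l} {x y : V}
    (hx : x ∈ supportedOn s) (hy : y ∈ supportedOn s) (hx0 : x ≠ 0) (hy0 : y ≠ 0) :
    ∃ w ∈ supportedOn s, ω x w = 1 ∧ ω y w = 1 := by
  obtain ⟨a, ha, hxa⟩ := exists_mem_supportedOn_symplecticForm_eq_one hx hx0
  obtain ⟨b, hb, hyb⟩ := exists_mem_supportedOn_symplecticForm_eq_one hy hy0
  rcases zmod_two_eq_zero_or_eq_one (ω y a) with hya | hya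
  · rcases zmod_two_eq_zero_or_eq_one (ω x b) with hxb | hxb
    · exact ⟨a + b, add_mem ha hb, by simp [hxa, hxb], by simp [hya, hyb]⟩
    · exact ⟨b, hb, hxb, hyb⟩
  · exact ⟨a, ha, hxa, hya⟩

theorem exists_symplecticForm_eq_zero_and_eq_one {x y : V} (hy : y ≠ 0) (hxy : x ≠ y) :
    ∃ a, ω x a = 0 ∧ ω y a = 1 := by
  have hxy' : x + y ≠ 0 := fun h => hxy (by rw [← sub_eq_zero, ZModModule.sub_eq_add, h])
  obtain ⟨b, -, hb⟩ := exists_mem_supportedOn_symplecticForm_eq_one (mem_supportedOn_univ _) hxy'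
  obtain ⟨c, -, hc⟩ := exists_mem_supportedOn_symplecticForm_eq_one (mem_supportedOn_univ _) hy
  rw [map_add, LinearMap.add_apply] at hb
  rcases zmod_two_eq_zero_or_eq_one (ω x b) with hxb | hxb
  · exact ⟨b, hxb, by simpa [hxb] using hb⟩
  rcases zmod_two_eq_zero_or_eq_one (ω x c) with hxc | hxc
  · exact ⟨c, hxc, hc⟩
  have hyb : ω y b = 0 := by simpa [hxb] using hb
  exact ⟨b + c, by simp [hxb, hxc, ZModModule.add_self], by simp [hyb, hc]⟩

theorem transvection_ne_one {v : V} (hv : v ≠ 0) : transvection v ≠ 1 := by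
  obtain ⟨y, -, hy⟩ := exists_mem_supportedOn_symplecticForm_eq_one (mem_supportedOn_univ v) hv
  intro h
  have := transvection_smul_of_eq_one (x := y) (by rwa [symplecticForm_comm])
  rw [h, one_smul] at this
  exact hv (by simpa using this)

theorem exists_mem_transvectionSubgroup_smul_eq {s : Finset l} {u v : V}
    (hu : u ∈ supportedOn s) (hv : v ∈ supportedOn s) (hu0 : u ≠ 0) (hv0 : v ≠ 0) :
    ∃ h ∈ transvectionSubgroup (ZMod 2) s, h • u = v := by
  rcases zmod_two_eq_zero_or_eq_one (ω u v) with - | huv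
  · obtain ⟨w, hw, huw, hvw⟩ :=
      exists_mem_supportedOn_symplecticForm_eq_one_and_eq_one hu hv hu0 hv0
    refine ⟨transvection (w + v) * transvection (u + w),
      mul_mem (transvection_mem_transvectionSubgroup (add_mem hw hv))
        (transvection_mem_transvectionSubgroup (add_mem hu hw)), ?_⟩
    rw [mul_smul, transvection_add_smul huw,
      transvection_add_smul (by rwa [symplecticForm_comm])]
  · exact ⟨transvection (u + v), transvection_mem_transvectionSubgroup (add_mem hu hv),
      transvection_add_smul huv⟩

theorem exists_mem_transvectionSubgroup_smul_eq_self_and_smul_eq {s : Finset l} {u v v' : V}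
    (hu : u ∈ supportedOn s) (hv : v ∈ supportedOn s) (hv' : v' ∈ supportedOn s)
    (huv : ω u v = 1) (huv' : ω u v' = 1) :
    ∃ h ∈ transvectionSubgroup (ZMod 2) s, h • u = u ∧ h • v = v' := by
  rcases zmod_two_eq_zero_or_eq_one (ω v v') with hvv' | hvv'
  · refine ⟨transvection (v + u + v') * transvection u,
      mul_mem (transvection_mem_transvectionSubgroup (add_mem (add_mem hv hu) hv'))
        (transvection_mem_transvectionSubgroup hu), ?_, ?_⟩
    · rw [mul_smul, transvection_smul_of_eq_zero (symplecticForm_self u),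
        transvection_smul_of_eq_zero (by simp [huv, huv', ZModModule.add_self])]
    · rw [mul_smul, transvection_smul_of_eq_one (v := u) (by rwa [symplecticForm_comm]),
        transvection_add_smul (by simp [hvv', huv'])]
  · exact ⟨transvection (v + v'), transvection_mem_transvectionSubgroup (add_mem hv hv'),
      transvection_smul_of_eq_zero (by simp [huv, huv', ZModModule.add_self]),
      transvection_add_smul hvv'⟩

theorem exists_mem_transvectionSubgroup_smul_eq_and_smul_eq {s : Finset l} {u v u' v' : V}
    (hu : u ∈ supportedOn s) (hv : v ∈ supportedOn s) (hu' : u' ∈ supportedOn s)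
    (hv' : v' ∈ supportedOn s) (huv : ω u v = 1) (huv' : ω u' v' = 1) :
    ∃ h ∈ transvectionSubgroup (ZMod 2) s, h • u = u' ∧ h • v = v' := by
  obtain ⟨h₁, hh₁, rfl⟩ := exists_mem_transvectionSubgroup_smul_eq hu hu'
    (ne_zero_of_symplecticForm_eq_one huv) (ne_zero_of_symplecticForm_eq_one huv')
  obtain ⟨h₂, hh₂, hu₂, hv₂⟩ := exists_mem_transvectionSubgroup_smul_eq_self_and_smul_eq hu'
    (smul_mem_supportedOn (transvectionSubgroup_le_fixingPlanesOutside s hh₁) hv) hv'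
    (by rwa [symplecticForm_smul_smul]) huv'
  exact ⟨h₂ * h₁, mul_mem hh₂ hh₁, by rw [mul_smul, hu₂], by rw [mul_smul, hv₂]⟩

theorem fixingPlanesOutside_le_transvectionSubgroup (s : Finset l) :
    fixingPlanesOutside (ZMod 2) s ≤ transvectionSubgroup (ZMod 2) s := by
  induction s using Finset.induction_on with
  | empty =>
    intro g hg
    rw [eq_one_of_smul_single fun i => mem_fixingPlanesOutside.1 hg i (Finset.notMem_empty _)]
    exact one_mem _
  | insert a s ha ih =>
    intro g hg
    have he : (Pi.single (.inl a) 1 : V) ∈ supportedOn (insert a s) :=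
      single_mem_supportedOn (Finset.mem_insert_self a s) 1
    have hf : (Pi.single (.inr a) 1 : V) ∈ supportedOn (insert a s) :=
      single_mem_supportedOn (Finset.mem_insert_self a s) 1
    have hef : ω (Pi.single (.inl a) 1 : V) (Pi.single (.inr a) 1) = 1 := by
      simp [single_inl_symplecticForm, ZModModule.neg_eq_self]
    obtain ⟨h, hh, hhe, hhf⟩ := exists_mem_transvectionSubgroup_smul_eq_and_smul_eq
      (smul_mem_supportedOn hg he) (smul_mem_supportedOn hg hf) he hf
      (by rwa [symplecticForm_smul_smul]) hef
    have hhg : h * g ∈ fixingPlanesOutside (ZMod 2) s := by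
      refine mem_fixingPlanesOutside.2 fun i hi => ?_
      by_cases hia : i.elim id id = a
      · rcases i with j | j <;> obtain rfl : j = a := hia
        exacts [(mul_smul h g _).trans hhe, (mul_smul h g _).trans hhf]
      · have hi' : i.elim id id ∉ insert a s := by simp [hia, hi]
        rw [mul_smul, mem_fixingPlanesOutside.1 hg i hi',
          mem_fixingPlanesOutside.1 (transvectionSubgroup_le_fixingPlanesOutside _ hh) i hi']
    simpa using
      mul_mem (inv_mem hh) (transvectionSubgroup_mono (Finset.subset_insert a s) (ih hhg))

theorem closure_range_transvection_eq_top :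
    Subgroup.closure (Set.range (transvection : V → symplecticGroup l (ZMod 2))) = ⊤ := by
  refine eq_top_iff.2 fun g _ => Subgroup.closure_mono (Set.image_subset_range _ _) <|
    fixingPlanesOutside_le_transvectionSubgroup Finset.univ <|
      mem_fixingPlanesOutside.2 fun i hi => absurd (Finset.mem_univ _) hi

theorem orbit_smul_eq_orbit_smul {G X : Type*} [Group G] [MulAction G X] {N : Subgroup G}
    [N.Normal] {x y : X} (h : orbit N x = orbit N y) (g : G) :
    orbit N (g • x) = orbit N (g • y) := by
  rw [← smul_orbit_eq_orbit_smul, h, smul_orbit_eq_orbit_smul]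

theorem map_transvection_eq_one {H : Type*} [Group H] (hl : 2 < Fintype.card l)
    (f : symplecticGroup l (ZMod 2) →* H)
    (hf : ∀ v w : V, v ≠ 0 → w ≠ 0 → f (transvection v) = f (transvection w)) (v : V) :
    f (transvection v) = 1 := by
  obtain ⟨a, b, c, hab, hac, hbc⟩ := Fintype.two_lt_card_iff.1 hl
  let e : l → V := fun j => Pi.single (.inl j) 1
  have horth : ∀ i j, ω (e i) (e j) = 0 := fun i j => by simp [e, single_inl_symplecticForm]
  have hne : ∀ (x : V) (j : l), x (.inl j) = 1 → x ≠ 0 := by rintro x j hx rfl; simp at hx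
  set t := f (transvection (e a))
  have hft : ∀ x : V, x ≠ 0 → f (transvection x) = t := fun x hx =>
    hf x (e a) hx (hne _ a (by simp [e]))
  have ht2 : t * t = 1 := by rw [← map_mul, transvection_mul_self, map_one]
  have ht : t = 1 := by
    have key := congrArg f (transvection_mul_six_eq (horth a b) (horth a c) (horth b c))
    simp only [map_mul] at key
    rw [hft (e a) (hne _ a (by simp [e])), hft (e b) (hne _ b (by simp [e])),
      hft (e c) (hne _ c (by simp [e])), hft (e a + e b) (hne _ b (by simp [e, hab])),
      hft (e b + e c) (hne _ c (by simp [e, hbc])), hft (e a + e c) (hne _ c (by simp [e, hac])),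
      hft (e a + e b + e c) (hne _ c (by simp [e, hac, hbc]))] at key
    calc t = t * t * t * t * t * t := key.symm
      _ = t * t * (t * t) * (t * t) := by simp only [mul_assoc]
      _ = 1 := by rw [ht2, one_mul, one_mul]
  rcases eq_or_ne v 0 with rfl | hv
  · rw [transvection_zero, map_one]
  · rw [hft v hv, ht]

section Orbit

variable {N : Subgroup (symplecticGroup l (ZMod 2))} [N.Normal]

theorem orbit_eq_of_symplecticForm_eq_one {u v w : V} (h : orbit N u = orbit N v)
    (huv : ω u v = 1) (huw : ω u w = 1) : orbit N u = orbit N w := by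
  obtain ⟨g, -, hgu, hgv⟩ := exists_mem_transvectionSubgroup_smul_eq_and_smul_eq
    (mem_supportedOn_univ u) (mem_supportedOn_univ v) (mem_supportedOn_univ u)
    (mem_supportedOn_univ w) huv huw
  simpa only [hgu, hgv] using orbit_smul_eq_orbit_smul h g

theorem orbit_eq_of_orbit_eq_of_symplecticForm_eq_one {u v t : V} (h : orbit N u = orbit N v)
    (huv : ω u v = 1) (ht : t ≠ 0) : orbit N u = orbit N t := by
  rcases zmod_two_eq_zero_or_eq_one (ω u t) with - | hut
  · obtain ⟨w, -, huw, htw⟩ := exists_mem_supportedOn_symplecticForm_eq_one_and_eq_one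
      (mem_supportedOn_univ u) (mem_supportedOn_univ t) (ne_zero_of_symplecticForm_eq_one huv) ht
    have huw' := orbit_eq_of_symplecticForm_eq_one h huv huw
    exact huw'.trans <| orbit_eq_of_symplecticForm_eq_one huw'.symm
      (by rwa [symplecticForm_comm]) (by rwa [symplecticForm_comm])
  · exact orbit_eq_of_symplecticForm_eq_one h huv hut

theorem orbit_eq_orbit_of_smul_ne_self {σ : symplecticGroup l (ZMod 2)} (hσ : σ ∈ N) {x : V}
    (hx : σ • x ≠ x) {u v : V} (hu : u ≠ 0) (hv : v ≠ 0) : orbit N u = orbit N v := by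
  suffices ∃ y z : V, orbit N y = orbit N z ∧ ω y z = 1 by
    obtain ⟨y, z, h, hyz⟩ := this
    exact (orbit_eq_of_orbit_eq_of_symplecticForm_eq_one h hyz hu).symm.trans
      (orbit_eq_of_orbit_eq_of_symplecticForm_eq_one h hyz hv)
  have hxσ : orbit N x = orbit N (σ • x) := (orbit_smul (⟨σ, hσ⟩ : N) x).symm
  rcases zmod_two_eq_zero_or_eq_one (ω x (σ • x)) with - | hx1
  · have hσx : σ • x ≠ 0 := (smul_ne_zero_iff_ne σ).2 fun h => hx (by rw [h, smul_zero])
    obtain ⟨a, hxa, hσxa⟩ := exists_symplecticForm_eq_zero_and_eq_one hσx hx.symm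
    have := orbit_smul_eq_orbit_smul hxσ (transvection a)
    rw [transvection_smul_of_eq_zero hxa, transvection_smul_of_eq_one hσxa] at this
    exact ⟨σ • x, σ • x + a, hxσ.symm.trans this, by simp [hσxa]⟩
  · exact ⟨x, σ • x, hxσ, hx1⟩

theorem transvection_mem_of_smul_ne_self (hl : 2 < Fintype.card l)
    {σ : symplecticGroup l (ZMod 2)} (hσ : σ ∈ N) {x : V} (hx : σ • x ≠ x) (v : V) :
    transvection v ∈ N := by
  have hx0 : x ≠ 0 := fun h => hx (by rw [h, smul_zero])
  have hconj : ∀ v : V, v ≠ 0 → ∃ ν ∈ N, ν * transvection x * ν⁻¹ = transvection v := by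
    intro v hv
    obtain ⟨ν, hν⟩ := (orbit_eq_orbit_of_smul_ne_self hσ hx hv hx0).symm ▸ mem_orbit_self v
    exact ⟨ν, ν.2, by rw [conj_transvection, ← hν]; rfl⟩
  have hmk : ∀ v : V, v ≠ 0 →
      QuotientGroup.mk' N (transvection v) = QuotientGroup.mk' N (transvection x) := by
    intro v hv
    obtain ⟨ν, hν, hv'⟩ := hconj v hv
    have hν1 : QuotientGroup.mk' N ν = 1 := (QuotientGroup.eq_one_iff ν).2 hν
    rw [← hv', map_mul, map_mul, map_inv, hν1, one_mul, inv_one, mul_one]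
  have hx_mem : transvection x ∈ N :=
    (QuotientGroup.eq_one_iff _).1 <| map_transvection_eq_one hl (QuotientGroup.mk' N)
      (fun v w hv hw => (hmk v hv).trans (hmk w hw).symm) x
  rcases eq_or_ne v 0 with rfl | hv
  · rw [transvection_zero]
    exact one_mem N
  · obtain ⟨ν, hν, hv'⟩ := hconj v hv
    rw [← hv']
    exact Subgroup.Normal.conj_mem ‹_› _ hx_mem ν

end Orbit

theorem isSimpleGroup_of_two_lt_card (hl : 2 < Fintype.card l) :
    IsSimpleGroup (symplecticGroup l (ZMod 2)) := by
  obtain ⟨a⟩ : Nonempty l := Fintype.card_pos_iff.1 (by omega)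
  have he : (Pi.single (.inl a) 1 : V) ≠ 0 := Pi.single_ne_zero_iff.2 one_ne_zero
  have : Nontrivial (symplecticGroup l (ZMod 2)) := ⟨⟨_, 1, transvection_ne_one he⟩⟩
  refine ⟨fun N _ => N.bot_or_exists_ne_one.imp id fun ⟨σ, hσ, hσ1⟩ => ?_⟩
  obtain ⟨x, hx⟩ : ∃ x : V, σ • x ≠ x := by
    by_contra! h
    exact hσ1 (ext_smul fun x => by rw [h, one_smul])
  rw [eq_top_iff, ← closure_range_transvection_eq_top, Subgroup.closure_le]
  rintro _ ⟨v, rfl⟩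
  exact transvection_mem_of_smul_ne_self hl hσ hx v

end ZModTwo

end SymplecticGroup

/-- For every `n ≥ 4`, the symplectic group `Sp(2n, 𝔽₂)` is simple. -/
theorem symplecticGroup_zmod_two_isSimpleGroup (n : ℕ) (hn : 4 ≤ n) :
    IsSimpleGroup (Matrix.symplecticGroup (Fin n) (ZMod 2)) :=
  SymplecticGroup.isSimpleGroup_of_two_lt_card (by rw [Fintype.card_fin]; omega)
end

section
/- For every field F of characteristic different from 2 and every n ≥ 1, the center of the symplectic group Sp(2n, F) consists precisely of the two scalar matrices I and −I. -/
/-!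
A central element `M` commutes with `J`, which forces the block form `[[A, B], [-B, A]]`, and with
the transvections `[[1, S], [0, 1]]` for symmetric `S`, which forces `B = 0` and `A` to commute
with every symmetric matrix. Since `single i j = single i i * (single i j + single j i)` for
`i ≠ j`, such an `A` is scalar, so `M = c • 1`; as `J` is invertible, `M J Mᵀ = J` gives `c² = 1`.
-/

open Matrix

namespace Matrix

variable {n R : Type*} [DecidableEq n] [Fintype n]

theorem mem_range_scalar_of_forall_symm_commute [Semiring R] {A : Matrix n n R}
    (hA : ∀ S : Matrix n n R, Sᵀ = S → Commute S A) : A ∈ Set.range (scalar n) := by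
  refine mem_range_scalar_of_commute_single fun i j hij => ?_
  have h : single i j (1 : R) = single i i 1 * (single i j 1 + single j i 1) := by
    rw [Matrix.mul_add, single_mul_single_of_ne (h := hij), single_mul_single_same, one_mul,
      add_zero]
  dsimp only
  rw [h]
  exact (hA _ (by simp)).mul_left (hA _ (by simp [add_comm]))

theorem scalar_mul_self_eq_one_iff [CommRing R] [NoZeroDivisors R] {c : R} :
    scalar n c * scalar n c = 1 ↔ scalar n c = 1 ∨ scalar n c = -1 := by
  refine ⟨fun h => ?_, by rintro (h | h) <;> simp [h]⟩
  cases isEmpty_or_nonempty n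
  · exact Or.inl (Subsingleton.elim _ _)
  rw [← map_mul, ← map_one (scalar n), scalar_inj, mul_self_eq_one_iff] at h
  rcases h with rfl | rfl
  · exact Or.inl (map_one _)
  · exact Or.inr ((map_neg _ _).trans (congrArg _ (map_one _)))

end Matrix

namespace SymplecticGroup

variable {l R : Type*} [DecidableEq l] [Fintype l] [CommRing R]

theorem fromBlocks_one_mem {S : Matrix l l R} (hS : Sᵀ = S) :
    fromBlocks 1 S 0 1 ∈ symplecticGroup l R := by
  simp [fromBlocks_mem_iff, hS]

theorem exists_eq_scalar_of_mem_center {M : symplecticGroup l R}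
    (hM : M ∈ Subgroup.center (symplecticGroup l R)) :
    ∃ c : R, (M : Matrix (l ⊕ l) (l ⊕ l) R) = scalar (l ⊕ l) c := by
  have hcomm (N : symplecticGroup l R) : (N : Matrix (l ⊕ l) (l ⊕ l) R) * M = M * N :=
    congrArg Subtype.val (Subgroup.mem_center_iff.mp hM N)
  obtain ⟨A, B, C, D, hblocks⟩ : ∃ A B C D : Matrix l l R, (M : Matrix _ _ R) = fromBlocks A B C D :=
    ⟨_, _, _, _, (fromBlocks_toBlocks _).symm⟩
  have hJ := hcomm (symJ l R)
  have hU (S : Matrix l l R) (hS : Sᵀ = S) := hcomm ⟨_, fromBlocks_one_mem hS⟩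
  simp only [coe_J, J, hblocks, fromBlocks_multiply, fromBlocks_inj, Matrix.zero_mul,
    Matrix.mul_zero, Matrix.one_mul, Matrix.mul_one, Matrix.neg_mul, Matrix.mul_neg, zero_add,
    add_zero, neg_inj] at hJ hU
  obtain ⟨hCB, -, rfl, -⟩ := hJ
  have hC : C = 0 := by simpa using (hU 1 transpose_one).1
  have hB : B = 0 := by rw [← hCB, hC, neg_zero]
  obtain ⟨c, rfl⟩ : A ∈ Set.range (scalar l) :=
    mem_range_scalar_of_forall_symm_commute fun S hS =>
      add_right_cancel ((add_comm _ _).trans (hU S hS).2.1)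
  refine ⟨c, ?_⟩
  rw [hblocks, hB, hC]
  simp [scalar_apply, fromBlocks_diagonal]

theorem scalar_mem_iff {c : R} :
    scalar (l ⊕ l) c ∈ symplecticGroup l R ↔ scalar (l ⊕ l) c * scalar (l ⊕ l) c = 1 := by
  have hJ : IsUnit (J l R) := (isUnit_iff_isUnit_det _).mpr (isUnit_det_J l R)
  have hT : (scalar (l ⊕ l) c)ᵀ = scalar (l ⊕ l) c := diagonal_transpose _
  rw [mem_iff, hT, Matrix.mul_assoc, ← scalar_commute c (fun _ => mul_comm _ _),
    ← Matrix.mul_assoc, hJ.mul_eq_right]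

end SymplecticGroup

theorem symplecticGroup_center_eq_general (F : Type*) [Field F]
    (n : ℕ) :
    (Subgroup.center (Matrix.symplecticGroup (Fin n) F) : Set (Matrix.symplecticGroup (Fin n) F)) =
      {1, ⟨-1, SymplecticGroup.neg_mem (Submonoid.one_mem _)⟩} := by
  ext M
  simp only [SetLike.mem_coe, Set.mem_insert_iff, Set.mem_singleton_iff]
  constructor
  · intro hM
    obtain ⟨c, hc⟩ := SymplecticGroup.exists_eq_scalar_of_mem_center hM
    have hsq := SymplecticGroup.scalar_mem_iff.mp (hc ▸ M.2)
    rcases scalar_mul_self_eq_one_iff.mp hsq with h | h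
    · exact Or.inl (Subtype.ext (hc.trans h))
    · exact Or.inr (Subtype.ext (hc.trans h))
  · rintro (rfl | rfl)
    · exact Subgroup.one_mem _
    · exact Subgroup.mem_center_iff.mpr fun g => Subtype.ext (by simp)

/-- For every field `F` with `char F ≠ 2` and every `n ≥ 1`, the center of the
symplectic group `Sp(2n, F)` consists precisely of the two matrices `I` and `-I`. -/
theorem symplecticGroup_center_eq (F : Type*) [Field F] (hF : ringChar F ≠ 2)
    (n : ℕ) (hn : 1 ≤ n) :
    (Subgroup.center (Matrix.symplecticGroup (Fin n) F) : Set (Matrix.symplecticGroup (Fin n) F)) =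
      {1, ⟨-1, SymplecticGroup.neg_mem (Submonoid.one_mem _)⟩} :=
  symplecticGroup_center_eq_general F n
end

section
/- If G is a perfect group admitting a balanced presentation, i.e. a presentation with n generators and n relators for some n, then the second integral group homology of G vanishes: H₂(G; ℤ) = 0. (Hence a perfect group of deficiency zero is superperfect, and its presentation 2-complex is acyclic.) -/
/-!
A 2-cycle that is not a boundary is detected by a `ℚ/ℤ`-valued character of `C₂ / B₂`, that is,
by a 2-cocycle; so it suffices that every 2-cocycle `γ` of `G` with values in an abelian group `A`
is a coboundary, i.e. that the central extension of `G` by `A` defined by `γ` splits.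
Lift the generators `xᵢ` of the presentation to the extension. Each relator `r` then evaluates to
a central element `t_r ∈ A`, and multiplying the lifts by `aᵢ ∈ A` changes `t_r` by `∑ᵢ e_{r,i} aᵢ`,
where `e_{r,i}` is the exponent sum of `xᵢ` in `r`. As `G` is perfect, the vectors `(e_{r,i})ᵢ`
span `ℤⁿ`; there are `n` of them, so they form a basis and the system `t_r + ∑ᵢ e_{r,i} aᵢ = 0`
can be solved. The corrected lifts satisfy the relators and so define a splitting.
-/

/-- Degree-2 differential of the inhomogeneous bar complex of `G` with trivial
coefficients `ℤ`:  `∂[g|h] = [h] - [gh] + [g]`. -/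
noncomputable def barD2 (G : Type*) [Group G] : ((G × G) →₀ ℤ) →ₗ[ℤ] (G →₀ ℤ) :=
  Finsupp.lift (G →₀ ℤ) ℤ (G × G) fun p =>
    Finsupp.single p.2 1 - Finsupp.single (p.1 * p.2) 1 + Finsupp.single p.1 1

/-- Degree-3 differential of the inhomogeneous bar complex of `G` with trivial
coefficients `ℤ`:  `∂[g|h|k] = [h|k] - [gh|k] + [g|hk] - [g|h]`. -/
noncomputable def barD3 (G : Type*) [Group G] : ((G × G × G) →₀ ℤ) →ₗ[ℤ] ((G × G) →₀ ℤ) :=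
  Finsupp.lift ((G × G) →₀ ℤ) ℤ (G × G × G) fun t =>
    Finsupp.single (t.2.1, t.2.2) 1 - Finsupp.single (t.1 * t.2.1, t.2.2) 1
      + Finsupp.single (t.1, t.2.1 * t.2.2) 1 - Finsupp.single (t.1, t.2.1) 1

/-- The second integral group homology `H₂(G; ℤ)` (the Schur multiplier of `G`),
computed from the bar complex: cycles in degree 2 modulo boundaries from degree 3. -/
noncomputable abbrev schurMultiplier (G : Type*) [Group G] : Type _ :=
  LinearMap.ker (barD2 G) ⧸
    Submodule.comap (LinearMap.ker (barD2 G)).subtype (LinearMap.range (barD3 G))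

open Module Submodule

structure TwoCocycle (G : Type*) [Group G] (A : Type*) [AddCommGroup A] where
  toFun : G → G → A
  cocycle : ∀ g h k : G, toFun (g * h) k + toFun g h = toFun h k + toFun g (h * k)

namespace TwoCocycle

variable {G : Type*} [Group G] {A : Type*} [AddCommGroup A] (γ : TwoCocycle G A)

instance : CoeFun (TwoCocycle G A) fun _ => G → G → A := ⟨toFun⟩

def IsCoboundary : Prop := ∃ f : G → A, ∀ g h, γ g h = f h - f (g * h) + f g

lemma apply_one_right (g : G) : γ g 1 = γ 1 1 := by
  simpa using γ.cocycle g 1 1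

lemma apply_one_left (g : G) : γ 1 g = γ 1 1 := by
  simpa using (γ.cocycle 1 1 g).symm

lemma apply_inv_self (g : G) : γ g⁻¹ g = γ g g⁻¹ := by
  simpa [apply_one_left, apply_one_right, add_comm] using (γ.cocycle g g⁻¹ g).symm

@[ext]
structure Ext (γ : TwoCocycle G A) where
  base : G
  fiber : A

-- `γ` is not assumed normalized, so the identity is `⟨1, -γ 1 1⟩` rather than `⟨1, 0⟩`.
instance : Group γ.Ext where
  mul x y := ⟨x.base * y.base, x.fiber + y.fiber + γ x.base y.base⟩
  one := ⟨1, -γ 1 1⟩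
  inv x := ⟨x.base⁻¹, -x.fiber - γ x.base x.base⁻¹ - γ 1 1⟩
  mul_assoc x y z := by
    refine Ext.ext (mul_assoc _ _ _) ?_
    show x.fiber + y.fiber + γ x.base y.base + z.fiber + γ (x.base * y.base) z.base
      = x.fiber + (y.fiber + z.fiber + γ y.base z.base) + γ x.base (y.base * z.base)
    linear_combination (norm := abel) γ.cocycle x.base y.base z.base
  one_mul x := by
    refine Ext.ext (one_mul _) ?_
    show -γ 1 1 + x.fiber + γ 1 x.base = x.fiber
    rw [γ.apply_one_left x.base]; abel
  mul_one x := by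
    refine Ext.ext (mul_one _) ?_
    show x.fiber + -γ 1 1 + γ x.base 1 = x.fiber
    rw [γ.apply_one_right x.base]; abel
  inv_mul_cancel x := by
    refine Ext.ext (inv_mul_cancel _) ?_
    show -x.fiber - γ x.base x.base⁻¹ - γ 1 1 + x.fiber + γ x.base⁻¹ x.base = -γ 1 1
    rw [γ.apply_inv_self]; abel

variable {γ}

@[simp] lemma mul_base (x y : γ.Ext) : (x * y).base = x.base * y.base := rfl
@[simp] lemma mul_fiber (x y : γ.Ext) : (x * y).fiber = x.fiber + y.fiber + γ x.base y.base := rfl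

variable (γ)

def proj : γ.Ext →* G where
  toFun := Ext.base
  map_one' := rfl
  map_mul' _ _ := rfl

@[simp] lemma proj_apply (y : γ.Ext) : γ.proj y = y.base := rfl

def incl : Multiplicative A →* γ.Ext where
  toFun a := ⟨1, a.toAdd - γ 1 1⟩
  map_one' := Ext.ext rfl (zero_sub _)
  map_mul' a b := by
    refine Ext.ext (one_mul 1).symm ?_
    show a.toAdd + b.toAdd - γ 1 1 = a.toAdd - γ 1 1 + (b.toAdd - γ 1 1) + γ 1 1
    abel

lemma incl_commute (a : Multiplicative A) (y : γ.Ext) : Commute (γ.incl a) y := by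
  refine Ext.ext (by simp [incl]) ?_
  show a.toAdd - γ 1 1 + y.fiber + γ 1 y.base = y.fiber + (a.toAdd - γ 1 1) + γ y.base 1
  rw [γ.apply_one_left y.base, γ.apply_one_right y.base]; abel

lemma mem_range_incl {y : γ.Ext} (hy : y.base = 1) : y ∈ γ.incl.range :=
  ⟨.ofAdd (y.fiber + γ 1 1), Ext.ext hy.symm (add_sub_cancel_right _ _)⟩

theorem isCoboundary_of_section (s : G →* γ.Ext) (hs : ∀ g, (s g).base = g) :
    γ.IsCoboundary := by
  refine ⟨fun g => -(s g).fiber, fun g h => ?_⟩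
  have hmul : (s (g * h)).fiber = (s g).fiber + (s h).fiber + γ g h := by
    rw [map_mul, mul_fiber, hs, hs]
  simp only [hmul]; abel

end TwoCocycle

namespace FreeGroup

variable {ι : Type*} [DecidableEq ι]

def exponentSums : FreeGroup ι →* Multiplicative (ι → ℤ) :=
  lift fun i => .ofAdd (Pi.single i 1)

end FreeGroup

namespace PresentedGroup

variable {ι : Type*} [Fintype ι] [DecidableEq ι]

theorem span_exponentSums_eq_top {rels : Set (FreeGroup ι)}
    (hperf : commutator (PresentedGroup rels) = ⊤) :
    span ℤ (Set.range fun r : rels => (FreeGroup.exponentSums r.1).toAdd) = ⊤ := by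
  set S := span ℤ (Set.range fun r : rels => (FreeGroup.exponentSums r.1).toAdd)
  let q : FreeGroup ι →* Multiplicative ((ι → ℤ) ⧸ S) :=
    (AddMonoidHom.toMultiplicative S.mkQ.toAddMonoidHom).comp FreeGroup.exponentSums
  have hrels : ∀ r ∈ rels, FreeGroup.lift (fun i => q (.of i)) r = 1 := fun r hr => by
    rw [← FreeGroup.lift_unique q fun _ => rfl]
    exact (QuotientAddGroup.eq_zero_iff _).2 (subset_span ⟨⟨r, hr⟩, rfl⟩)
  have hsingle (i : ι) : Pi.single i 1 ∈ S := by
    have := Abelianization.commutator_subset_ker (toGroup hrels)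
      (hperf.ge (Subgroup.mem_top (of i)))
    rw [MonoidHom.mem_ker, toGroup.of] at this
    simpa [q, FreeGroup.exponentSums] using this
  rw [eq_top_iff, ← (Pi.basisFun ℤ ι).span_eq, span_le]
  rintro _ ⟨i, rfl⟩
  simpa using hsingle i

noncomputable def exponentSumsBasis (rels : Finset (FreeGroup ι))
    (hperf : commutator (PresentedGroup (rels : Set (FreeGroup ι))) = ⊤)
    (hcard : rels.card = Fintype.card ι) : Basis rels ℤ (ι → ℤ) :=
  basisOfTopLeSpanOfCardEqFinrank (fun r : rels => (FreeGroup.exponentSums r.1).toAdd)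
    (span_exponentSums_eq_top hperf).ge (by simpa [finrank_fintype_fun_eq_card] using hcard)

theorem exists_central_correction {rels : Finset (FreeGroup ι)}
    (hperf : commutator (PresentedGroup (rels : Set (FreeGroup ι))) = ⊤)
    (hcard : rels.card = Fintype.card ι)
    {E : Type*} [Group E] {A : Type*} [AddCommGroup A] (z : Multiplicative A →* E)
    (hz : ∀ a y, Commute (z a) y) (x : ι → E) (hx : ∀ r ∈ rels, FreeGroup.lift x r ∈ z.range) :
    ∃ a : ι → A, ∀ r ∈ rels, FreeGroup.lift (fun i => x i * z (.ofAdd (a i))) r = 1 := by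
  choose t ht using fun r : rels => hx r.1 r.2
  let L := (exponentSumsBasis rels hperf hcard).constr ℤ fun r => -(t r).toAdd
  let c : FreeGroup ι →* E :=
    z.comp ((AddMonoidHom.toMultiplicative L.toAddMonoidHom).comp FreeGroup.exponentSums)
  let ψ : FreeGroup ι →* E := ((FreeGroup.lift x).noncommCoprod c fun _ _ => (hz _ _).symm).comp
    ((MonoidHom.id _).prod (MonoidHom.id _))
  refine ⟨fun i => L (Pi.single i 1), fun r hr => ?_⟩
  have hψ : FreeGroup.lift (fun i => x i * z (.ofAdd (L (Pi.single i 1)))) = ψ := by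
    ext i; simp [ψ, c, FreeGroup.exponentSums]
  have hL : L (FreeGroup.exponentSums r).toAdd = -(t ⟨r, hr⟩).toAdd := by
    have := (exponentSumsBasis rels hperf hcard).constr_basis ℤ (fun r => -(t r).toAdd) ⟨r, hr⟩
    rw [exponentSumsBasis, coe_basisOfTopLeSpanOfCardEqFinrank] at this
    exact this
  rw [hψ]
  show FreeGroup.lift x r * z (.ofAdd (L (FreeGroup.exponentSums r).toAdd)) = 1
  rw [← ht ⟨r, hr⟩, hL, ofAdd_neg, ofAdd_toAdd, map_inv, mul_inv_cancel]

end PresentedGroup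

theorem TwoCocycle.isCoboundary_of_perfect_of_balanced {G : Type*} [Group G] {A : Type*}
    [AddCommGroup A] {ι : Type*} [Fintype ι] [DecidableEq ι] {rels : Finset (FreeGroup ι)}
    (hperf : commutator (PresentedGroup (rels : Set (FreeGroup ι))) = ⊤)
    (hcard : rels.card = Fintype.card ι) (e : G ≃* PresentedGroup (rels : Set (FreeGroup ι)))
    (γ : TwoCocycle G A) : γ.IsCoboundary := by
  let x (i : ι) : γ.Ext := ⟨e.symm (.of i), 0⟩
  have hx : γ.proj.comp (FreeGroup.lift x) = e.symm.toMonoidHom.comp (PresentedGroup.mk _) :=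
    FreeGroup.ext_hom _ _ fun i => by simp [x, PresentedGroup.of]
  obtain ⟨a, ha⟩ := PresentedGroup.exists_central_correction hperf hcard γ.incl γ.incl_commute x
    fun r hr => γ.mem_range_incl <| by
      simpa [PresentedGroup.one_of_mem hr] using DFunLike.congr_fun hx r
  have hs : γ.proj.comp (PresentedGroup.toGroup ha) = e.symm.toMonoidHom :=
    PresentedGroup.ext fun i => by simp [x, incl]
  exact γ.isCoboundary_of_section ((PresentedGroup.toGroup ha).comp e.toMonoidHom)
    fun g => by simpa using DFunLike.congr_fun hs (e g)

section BarComplex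

variable {G : Type*} [Group G]

@[simp]
lemma barD2_single (g h : G) :
    barD2 G (Finsupp.single (g, h) 1) =
      Finsupp.single h 1 - Finsupp.single (g * h) 1 + Finsupp.single g 1 := by
  simp [barD2]

@[simp]
lemma barD3_single (g h k : G) :
    barD3 G (Finsupp.single (g, h, k) 1) =
      Finsupp.single (h, k) 1 - Finsupp.single (g * h, k) 1
        + Finsupp.single (g, h * k) 1 - Finsupp.single (g, h) 1 := by
  simp [barD3]

variable {A : Type*} [AddCommGroup A]

noncomputable def TwoCocycle.ofBarCochain (χ : ((G × G) →₀ ℤ) →ₗ[ℤ] A) (hχ : χ ∘ₗ barD3 G = 0) :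
    TwoCocycle G A where
  toFun g h := χ (Finsupp.single (g, h) 1)
  cocycle g h k := by
    have := LinearMap.congr_fun hχ (Finsupp.single (g, h, k) 1)
    simp only [LinearMap.comp_apply, barD3_single, map_add, map_sub, LinearMap.zero_apply] at this
    linear_combination (norm := abel) -this

theorem TwoCocycle.apply_eq_zero_of_isCoboundary {χ : ((G × G) →₀ ℤ) →ₗ[ℤ] A}
    {hχ : χ ∘ₗ barD3 G = 0} (hcob : (ofBarCochain χ hχ).IsCoboundary) {m : (G × G) →₀ ℤ}
    (hm : barD2 G m = 0) : χ m = 0 := by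
  obtain ⟨f, hf⟩ := hcob
  have hfactor : χ = Finsupp.linearCombination ℤ f ∘ₗ barD2 G := by
    ext ⟨g, h⟩
    simpa [ofBarCochain] using hf g h
  rw [hfactor, LinearMap.comp_apply, hm, map_zero]

theorem subsingleton_schurMultiplier_of_isCoboundary
    (h : ∀ γ : TwoCocycle G (AddCircle (1 : ℚ)), γ.IsCoboundary) :
    Subsingleton (schurMultiplier G) := by
  refine subsingleton_of_forall_eq 0 fun x => ?_
  obtain ⟨⟨m, hm⟩, rfl⟩ := Submodule.Quotient.mk_surjective _ x
  rw [Submodule.Quotient.mk_eq_zero]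
  by_contra hmB
  obtain ⟨c, hc⟩ := CharacterModule.exists_character_apply_ne_zero_of_ne_zero
    (a := (LinearMap.range (barD3 G)).mkQ m) (by simpa using hmB)
  exact hc (TwoCocycle.apply_eq_zero_of_isCoboundary (χ := c.toIntLinearMap ∘ₗ mkQ _)
    (hχ := by rw [LinearMap.comp_assoc, LinearMap.range_mkQ_comp, LinearMap.comp_zero]) (h _)
    (LinearMap.mem_ker.1 hm))

end BarComplex

theorem commutator_eq_top_of_surjective {G H : Type*} [Group G] [Group H] {f : G →* H}
    (hf : Function.Surjective f) (hG : commutator G = ⊤) : commutator H = ⊤ := by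
  have hmap := map_commutator_eq (f := f)
  rwa [hG, ← MonoidHom.range_eq_map, MonoidHom.range_eq_top.2 hf, ← commutator_def, eq_comm] at hmap

/-- A perfect group admitting a balanced presentation (with `n` generators and `n`
relators) has vanishing second integral homology: `H₂(G; ℤ) = 0`; i.e. a perfect
group of deficiency zero is superperfect. -/
theorem perfect_balanced_presentation_superperfect (G : Type*) [Group G]
    (hperf : commutator G = ⊤)
    (n : ℕ) (rels : Finset (FreeGroup (Fin n))) (hcard : rels.card = n)
    (hpres : Nonempty (G ≃* PresentedGroup (rels : Set (FreeGroup (Fin n))))) :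
    Subsingleton (schurMultiplier G) := by
  obtain ⟨e⟩ := hpres
  have hperfP := commutator_eq_top_of_surjective (f := e.toMonoidHom) e.surjective hperf
  exact subsingleton_schurMultiplier_of_isCoboundary fun γ =>
    γ.isCoboundary_of_perfect_of_balanced hperfP (by simpa using hcard) e
end
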